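/- Let φ, ψ be modal formulas, σ = sig(φ) ∪ sig(ψ) and ρ = sig(φ) ∩ sig(ψ). Then φ → ψ has no interpolant in DL if and only if there exist σ-models M_φ and M_ψ based on symmetric weakly transitive frames, with roots r_φ and r_ψ respectively, such that (i) M_φ,r_φ ⊨ φ and M_ψ,r_ψ ⊨ ¬ψ, and (ii) M_φ,r_φ ∼ρ M_ψ,r_ψ. -/

import Mathlib

/-!
An interpolant is a formula in the common signature `ρ`, and such formulas are invariant under
`ρ`-bisimulation; this gives the easy direction. Conversely, build the canonical model over
maximal finitely DL-satisfiable sets of formulas: it is symmetric and weakly transitive, and it is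
modally saturated, so equality of `ρ`-types is a `ρ`-bisimulation on it. If there is no
interpolant, `¬ψ` is consistent with the `ρ`-consequences of `φ`; a maximal extension `Γ2` has a
`ρ`-type consistent with `φ`, and a maximal extension `Γ1` of that has the same `ρ`-type. By weak transitivity the
submodels generated by `Γ1` and `Γ2` consist of the point and its successors, so they are rooted.
-/

/-- Modal formulas built from propositional variables (indexed by ℕ),
constants ⊤, ⊥, negation, conjunction and the modal operator ◇. -/
inductive MF : Type where
  | var : ℕ → MF
  | top : MF
  | bot : MF
  | neg : MF → MF
  | and : MF → MF → MF
  | dia : MF → MF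
deriving DecidableEq

namespace MF

/-- Disjunction, as an abbreviation. -/
def or (a b : MF) : MF := neg (and (neg a) (neg b))

/-- Implication, as an abbreviation. -/
def imp (a b : MF) : MF := MF.or (neg a) b

/-- Box, as an abbreviation: □φ := ¬◇¬φ. -/
def box (a : MF) : MF := neg (dia (neg a))

/-- The (finite) set of propositional variables occurring in a formula. -/
def sig : MF → Finset ℕ
  | var n => {n}
  | top => ∅
  | bot => ∅
  | neg a => a.sig
  | and a b => a.sig ∪ b.sig
  | dia a => a.sig

/-- The set of subformulas of a formula. -/
def subf : MF → Finset MF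
  | var n => {var n}
  | top => {top}
  | bot => {bot}
  | neg a => insert (neg a) (subf a)
  | and a b => insert (and a b) (subf a ∪ subf b)
  | dia a => insert (dia a) (subf a)

/-- The number of subformulas of a formula. -/
def nsub (a : MF) : ℕ := (subf a).card

end MF

/-- A Kripke model: a binary (accessibility) relation on worlds together with
a valuation assigning to each propositional variable a set of worlds. -/
structure KModel (W : Type) where
  R : W → W → Prop
  val : ℕ → W → Prop

/-- Weak transitivity: xRy and yRz imply x = z or xRz. -/
def WTrans {W : Type} (R : W → W → Prop) : Prop :=
  ∀ x y z : W, R x y → R y z → x = z ∨ R x z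

/-- The usual Kripke truth relation. -/
def Sat {W : Type} (M : KModel W) : W → MF → Prop
  | x, .var n => M.val n x
  | _, .top => True
  | _, .bot => False
  | x, .neg a => ¬ Sat M x a
  | x, .and a b => Sat M x a ∧ Sat M x b
  | x, .dia a => ∃ y, M.R x y ∧ Sat M y a

/-- wK4-validity: truth at every point of every model based on a weakly
transitive frame. -/
def WK4Valid (φ : MF) : Prop :=
  ∀ (W : Type) (M : KModel W), WTrans M.R → ∀ x : W, Sat M x φ

/-- The cluster of a point x: C(x) = {x} ∪ {y | xRy and yRx}. -/
def cluster {W : Type} (R : W → W → Prop) (x : W) : Set W :=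
  {x} ∪ {y | R x y ∧ R y x}

/-- C R C' for sets of points: xRy for some x ∈ C, y ∈ C'. -/
def clusterRel {W : Type} (R : W → W → Prop) (C C' : Set W) : Prop :=
  ∃ x ∈ C, ∃ y ∈ C', R x y

/-- C R y for a set C and point y: xRy for some x ∈ C. -/
def clusterRelPt {W : Type} (R : W → W → Prop) (C : Set W) (y : W) : Prop :=
  ∃ x ∈ C, R x y

/-- C R^s C': C R C' and C ≠ C'. -/
def clusterRelS {W : Type} (R : W → W → Prop) (C C' : Set W) : Prop :=
  clusterRel R C C' ∧ C ≠ C'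

/-- A set is a cluster if it is the cluster of some point. -/
def IsCluster {W : Type} (R : W → W → Prop) (C : Set W) : Prop :=
  ∃ x : W, C = cluster R x

/-- A σ-model is descriptive if it satisfies (dif), (ref) and (com). -/
def Descriptive {W : Type} (σ : Finset ℕ) (M : KModel W) : Prop :=
  (∀ x y : W, (∀ φ : MF, φ.sig ⊆ σ → (Sat M x φ ↔ Sat M y φ)) → x = y) ∧
  (∀ x y : W, M.R x y ↔ ∀ χ : MF, χ.sig ⊆ σ → Sat M y χ → Sat M x (MF.dia χ)) ∧
  (∀ Γ : Set MF, (∀ φ ∈ Γ, φ.sig ⊆ σ) →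
    (∀ Γ' : Finset MF, ↑Γ' ⊆ Γ → ∃ x : W, ∀ φ ∈ Γ', Sat M x φ) →
    ∃ x : W, ∀ φ ∈ Γ, Sat M x φ)

/-- The ρ-type of a point: the set of all ρ-formulas true at it. -/
def rType {W : Type} (M : KModel W) (ρ : Finset ℕ) (x : W) : Set MF :=
  {φ : MF | φ.sig ⊆ ρ ∧ Sat M x φ}

/-- A cluster C is ρ-maximal if whenever C R y and some x ∈ C has the same
ρ-type as y, then y ∈ C. -/
def RhoMaximal {W : Type} (M : KModel W) (ρ : Finset ℕ) (C : Set W) : Prop :=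
  ∀ x ∈ C, ∀ y : W, clusterRelPt M.R C y → rType M ρ x = rType M ρ y → y ∈ C

/-- β is a ρ-bisimulation between M1 and M2: conditions (atom) and (move). -/
def IsBisim {W1 W2 : Type} (ρ : Finset ℕ) (M1 : KModel W1) (M2 : KModel W2)
    (β : W1 → W2 → Prop) : Prop :=
  ∀ x1 x2, β x1 x2 →
    (∀ n ∈ ρ, M1.val n x1 ↔ M2.val n x2) ∧
    (∀ y1, M1.R x1 y1 → ∃ y2, M2.R x2 y2 ∧ β y1 y2) ∧
    (∀ y2, M2.R x2 y2 → ∃ y1, M1.R x1 y1 ∧ β y1 y2)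

/-- M1,x1 ∼ρ M2,x2 : some ρ-bisimulation relates x1 to x2. -/
def Bisimilar {W1 W2 : Type} (ρ : Finset ℕ) (M1 : KModel W1) (x1 : W1)
    (M2 : KModel W2) (x2 : W2) : Prop :=
  ∃ β : W1 → W2 → Prop, IsBisim ρ M1 M2 β ∧ β x1 x2

/-- DL-validity via frames for DL: truth at every point of every model based
on a symmetric weakly transitive frame. -/
def DLValid (φ : MF) : Prop :=
  ∀ (W : Type) (M : KModel W), WTrans M.R → Symmetric M.R → ∀ x : W, Sat M x φ

open Set

namespace MF

noncomputable def conj (s : Finset MF) : MF := s.toList.foldr MF.and MF.top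

theorem sig_foldr_and_subset {ρ : Finset ℕ} :
    ∀ {l : List MF}, (∀ a ∈ l, a.sig ⊆ ρ) → (l.foldr MF.and MF.top).sig ⊆ ρ
  | [], _ => by simp [sig]
  | a :: l, h => by
    rw [List.forall_mem_cons] at h
    simpa only [List.foldr_cons, sig, Finset.union_subset_iff] using
      ⟨h.1, sig_foldr_and_subset h.2⟩

theorem sig_conj_subset {s : Finset MF} {ρ : Finset ℕ} (h : ∀ a ∈ s, a.sig ⊆ ρ) :
    (conj s).sig ⊆ ρ :=
  sig_foldr_and_subset fun a ha => h a (Finset.mem_toList.1 ha)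

end MF

section Semantics

variable {W : Type} (M : KModel W) (x : W)

theorem sat_imp (a b : MF) : Sat M x (a.imp b) ↔ (Sat M x a → Sat M x b) := by
  simp only [MF.imp, MF.or, Sat]
  tauto

theorem sat_or (a b : MF) : Sat M x (a.or b) ↔ Sat M x a ∨ Sat M x b := by
  simp only [MF.or, Sat]
  tauto

theorem sat_box (a : MF) : Sat M x a.box ↔ ∀ y, M.R x y → Sat M y a := by
  simp [MF.box, Sat]

theorem sat_foldr_and :
    ∀ l : List MF, Sat M x (l.foldr MF.and MF.top) ↔ ∀ a ∈ l, Sat M x a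
  | [] => by simp [Sat]
  | a :: l => by simp [Sat, sat_foldr_and l]

theorem sat_conj (s : Finset MF) : Sat M x (MF.conj s) ↔ ∀ a ∈ s, Sat M x a := by
  simp [MF.conj, sat_foldr_and]

end Semantics

section Bisimulation

variable {W1 W2 : Type} {ρ : Finset ℕ} {M1 : KModel W1} {M2 : KModel W2}
  {β : W1 → W2 → Prop}

theorem IsBisim.sat_iff (hβ : IsBisim ρ M1 M2 β) {α : MF} (hα : α.sig ⊆ ρ) {x1 : W1}
    {x2 : W2} (hx : β x1 x2) : Sat M1 x1 α ↔ Sat M2 x2 α := by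
  induction α generalizing x1 x2 with
  | var n => exact (hβ x1 x2 hx).1 n (hα (Finset.mem_singleton_self n))
  | top => exact Iff.rfl
  | bot => exact Iff.rfl
  | neg a ih => exact not_congr (ih hα hx)
  | and a b iha ihb =>
    rw [MF.sig, Finset.union_subset_iff] at hα
    exact and_congr (iha hα.1 hx) (ihb hα.2 hx)
  | dia a ih =>
    constructor
    · rintro ⟨y1, hxy, hy⟩
      obtain ⟨y2, hxy2, hyy⟩ := (hβ x1 x2 hx).2.1 y1 hxy
      exact ⟨y2, hxy2, (ih hα hyy).1 hy⟩
    · rintro ⟨y2, hxy, hy⟩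
      obtain ⟨y1, hxy1, hyy⟩ := (hβ x1 x2 hx).2.2 y2 hxy
      exact ⟨y1, hxy1, (ih hα hyy).2 hy⟩

def KModel.restrict {W : Type} (M : KModel W) (U : Set W) : KModel U :=
  ⟨fun x y => M.R x y, fun n x => M.val n x⟩

theorem KModel.isBisim_restrict_val {W : Type} (M : KModel W) {U : Set W}
    (hU : ∀ x ∈ U, ∀ y, M.R x y → y ∈ U) (ρ : Finset ℕ) :
    IsBisim ρ (M.restrict U) M fun x y => x.1 = y := by
  rintro x _ rfl
  exact ⟨fun _ _ => Iff.rfl, fun y hxy => ⟨y, hxy, rfl⟩,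
    fun y hxy => ⟨⟨y, hU x x.2 y hxy⟩, hxy, rfl⟩⟩

theorem KModel.sat_restrict_iff {W : Type} (M : KModel W) {U : Set W}
    (hU : ∀ x ∈ U, ∀ y, M.R x y → y ∈ U) (α : MF) (x : U) :
    Sat (M.restrict U) x α ↔ Sat M x α :=
  (M.isBisim_restrict_val hU α.sig).sat_iff subset_rfl rfl

theorem IsBisim.restrict (hβ : IsBisim ρ M1 M2 β) {U1 : Set W1} {U2 : Set W2}
    (hU1 : ∀ x ∈ U1, ∀ y, M1.R x y → y ∈ U1)
    (hU2 : ∀ x ∈ U2, ∀ y, M2.R x y → y ∈ U2) :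
    IsBisim ρ (M1.restrict U1) (M2.restrict U2) fun x y => β x y := by
  intro x1 x2 hx
  obtain ⟨hatom, hforth, hback⟩ := hβ x1 x2 hx
  refine ⟨hatom, fun y1 hxy => ?_, fun y2 hxy => ?_⟩
  · obtain ⟨y2, hxy2, hy⟩ := hforth y1 hxy
    exact ⟨⟨y2, hU2 x2 x2.2 y2 hxy2⟩, hxy2, hy⟩
  · obtain ⟨y1, hxy1, hy⟩ := hback y2 hxy
    exact ⟨⟨y1, hU1 x1 x1.2 y1 hxy1⟩, hxy1, hy⟩

end Bisimulation

section Rooted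

variable {W : Type}

def generated (R : W → W → Prop) (r : W) : Set W := {x | x = r ∨ R r x}

theorem mem_generated_self (R : W → W → Prop) (r : W) : r ∈ generated R r := Or.inl rfl

theorem WTrans.generated_closed {R : W → W → Prop} (h : WTrans R) (r : W) :
    ∀ x ∈ generated R r, ∀ y, R x y → y ∈ generated R r := by
  rintro x (rfl | hrx) y hxy
  · exact Or.inr hxy
  · exact (h r x y hrx hxy).imp Eq.symm id

theorem KModel.wtrans_restrict {M : KModel W} (h : WTrans M.R) (U : Set W) :
    WTrans (M.restrict U).R :=
  fun x y z hxy hyz => (h x y z hxy hyz).imp Subtype.ext id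

theorem KModel.symmetric_restrict {M : KModel W} (h : Symmetric M.R) (U : Set W) :
    Symmetric (M.restrict U).R :=
  fun _ _ hxy => h hxy

theorem KModel.restrict_generated_root (M : KModel W) (r : W) (x : generated M.R r)
    (hx : x ≠ ⟨r, mem_generated_self M.R r⟩) :
    (M.restrict (generated M.R r)).R ⟨r, mem_generated_self M.R r⟩ x :=
  x.2.resolve_left fun h => hx (Subtype.ext h)

theorem exists_rooted_bisimilar {W1 W2 : Type} {ρ : Finset ℕ} {M1 : KModel W1}
    {M2 : KModel W2} {β : W1 → W2 → Prop} (ht1 : WTrans M1.R) (ht2 : WTrans M2.R)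
    (hs1 : Symmetric M1.R) (hs2 : Symmetric M2.R) (hβ : IsBisim ρ M1 M2 β) {r1 : W1}
    {r2 : W2} (hr : β r1 r2) {φ χ : MF} (hφ : Sat M1 r1 φ) (hχ : Sat M2 r2 χ) :
    ∃ (V1 : Type) (N1 : KModel V1) (s1 : V1) (V2 : Type) (N2 : KModel V2) (s2 : V2),
      WTrans N1.R ∧ WTrans N2.R ∧ Symmetric N1.R ∧ Symmetric N2.R ∧
      (∀ x : V1, x ≠ s1 → N1.R s1 x) ∧ (∀ x : V2, x ≠ s2 → N2.R s2 x) ∧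
      Sat N1 s1 φ ∧ Sat N2 s2 χ ∧ Bisimilar ρ N1 s1 N2 s2 := by
  have hU1 := ht1.generated_closed r1
  have hU2 := ht2.generated_closed r2
  exact ⟨_, M1.restrict (generated M1.R r1), ⟨r1, mem_generated_self _ r1⟩,
    _, M2.restrict (generated M2.R r2), ⟨r2, mem_generated_self _ r2⟩,
    KModel.wtrans_restrict ht1 _, KModel.wtrans_restrict ht2 _,
    KModel.symmetric_restrict hs1 _, KModel.symmetric_restrict hs2 _,
    M1.restrict_generated_root r1, M2.restrict_generated_root r2,
    (M1.sat_restrict_iff hU1 φ _).2 hφ, (M2.sat_restrict_iff hU2 χ _).2 hχ,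
    _, hβ.restrict hU1 hU2, hr⟩

end Rooted

namespace DL

def Satisfiable (Δ : Set MF) : Prop :=
  ∃ (W : Type) (M : KModel W) (x : W), WTrans M.R ∧ Symmetric M.R ∧ ∀ α ∈ Δ, Sat M x α

def Entails (Δ : Set MF) (β : MF) : Prop :=
  ∀ (W : Type) (M : KModel W), WTrans M.R → Symmetric M.R →
    ∀ x, (∀ α ∈ Δ, Sat M x α) → Sat M x β

/-- Consistency is semantic (finite DL-satisfiability), so the canonical model needs no proof
system and no compactness theorem. -/
def Consistent (Γ : Set MF) : Prop := ∀ Δ ⊆ Γ, Δ.Finite → Satisfiable Δ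

def MaxConsistent (Γ : Set MF) : Prop := Consistent Γ ∧ ∀ α : MF, α ∈ Γ ∨ α.neg ∈ Γ

theorem Consistent.insert_or_insert_neg {Γ : Set MF} (h : Consistent Γ) (α : MF) :
    Consistent (insert α Γ) ∨ Consistent (insert α.neg Γ) := by
  by_contra! hc
  simp only [Consistent, not_forall] at hc
  obtain ⟨⟨Δ1, h1, hf1, hs1⟩, Δ2, h2, hf2, hs2⟩ := hc
  obtain ⟨W, M, x, ht, hs, hx⟩ := h (Δ1 \ {α} ∪ Δ2 \ {α.neg})
    (union_subset (diff_singleton_subset_iff.2 h1) (diff_singleton_subset_iff.2 h2))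
    (hf1.sdiff.union hf2.sdiff)
  by_cases hα : Sat M x α
  · refine hs1 ⟨W, M, x, ht, hs, fun β hβ => ?_⟩
    by_cases hβα : β = α
    · exact hβα ▸ hα
    · exact hx β (Or.inl ⟨hβ, hβα⟩)
  · refine hs2 ⟨W, M, x, ht, hs, fun β hβ => ?_⟩
    by_cases hβα : β = α.neg
    · exact hβα ▸ hα
    · exact hx β (Or.inr ⟨hβ, hβα⟩)

theorem Consistent.exists_maxConsistent_superset {Γ : Set MF} (h : Consistent Γ) :
    ∃ Δ, Γ ⊆ Δ ∧ MaxConsistent Δ := by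
  have hfin : Order.IsOfFiniteCharacter {Γ : Set MF | Consistent Γ} := fun Γ =>
    ⟨fun hΓ Δ hΔ _ Δ' hΔ' hf' => hΓ Δ' (hΔ'.trans hΔ) hf',
      fun hΓ Δ hΔ hf => hΓ Δ hΔ hf Δ subset_rfl hf⟩
  obtain ⟨Δ, hΓΔ, hmax⟩ := hfin.exists_maximal h
  refine ⟨Δ, hΓΔ, hmax.prop, fun α => ?_⟩
  exact (hmax.prop.insert_or_insert_neg α).imp hmax.mem_of_prop_insert hmax.mem_of_prop_insert

namespace MaxConsistent

variable {Γ : Set MF}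

theorem mem_of_entails (hΓ : MaxConsistent Γ) {Δ : Set MF} (hΔ : Δ ⊆ Γ) (hf : Δ.Finite) {β : MF}
    (h : Entails Δ β) : β ∈ Γ := by
  refine (hΓ.2 β).resolve_right fun hβ => ?_
  obtain ⟨W, M, x, ht, hs, hx⟩ := hΓ.1 (insert β.neg Δ) (insert_subset hβ hΔ) (hf.insert _)
  exact hx _ (mem_insert _ _) (h W M ht hs x fun α hα => hx α (mem_insert_of_mem _ hα))

theorem neg_mem_iff (hΓ : MaxConsistent Γ) (α : MF) : α.neg ∈ Γ ↔ α ∉ Γ := by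
  refine ⟨fun hn hα => ?_, (hΓ.2 α).resolve_left⟩
  obtain ⟨W, M, x, -, -, hx⟩ :=
    hΓ.1 {α, α.neg} (insert_subset hα (singleton_subset_iff.2 hn)) (toFinite _)
  exact hx α.neg (by simp) (hx α (by simp))

theorem eq_of_subset (hΓ : MaxConsistent Γ) {Δ : Set MF} (hΔ : MaxConsistent Δ) (h : Γ ⊆ Δ) : Γ = Δ :=
  h.antisymm fun α hα =>
    by_contra fun hn => (hΔ.neg_mem_iff α).1 (h ((hΓ.neg_mem_iff α).2 hn)) hα

end MaxConsistent

abbrev World : Type := {Γ : Set MF // MaxConsistent Γ}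

def canR (Γ Δ : World) : Prop := ∀ θ : MF, θ.box ∈ Γ.1 → θ ∈ Δ.1

def canModel : KModel World := ⟨canR, fun n Γ => MF.var n ∈ Γ.1⟩

theorem canR_symmetric : Symmetric canR := by
  intro Γ Δ hΓΔ θ hθ
  by_contra hc
  have hbox : (MF.dia θ.neg).box ∈ Γ.1 :=
    Γ.2.mem_of_entails (singleton_subset_iff.2 ((Γ.2.neg_mem_iff θ).2 hc)) (toFinite _)
      fun W M _ hs x hx => (sat_box M x _).2 fun y hxy => ⟨x, hs hxy, hx _ rfl⟩
  exact (Δ.2.neg_mem_iff (MF.dia θ.neg)).1 hθ (hΓΔ _ hbox)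

theorem canR_wtrans : WTrans canR := by
  intro Γ Δ Z hΓΔ hΔZ
  by_cases hΓZ : canR Γ Z
  · exact Or.inr hΓZ
  simp only [canR, not_forall] at hΓZ
  obtain ⟨δ, hδ, hδZ⟩ := hΓZ
  refine Or.inl (Subtype.ext (Γ.2.eq_of_subset Z.2 fun α hα => ?_))
  -- In a weakly transitive frame an R²-successor of a point is the point itself or an R-successor.
  have hbb : (δ.or α).box.box ∈ Γ.1 :=
    Γ.2.mem_of_entails (Δ := {δ.box, α}) (by simp [insert_subset_iff, hδ, hα]) (toFinite _)
      fun W M ht _ x hx => by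
        simp only [sat_box, sat_or]
        intro y hxy z hyz
        rcases ht x y z hxy hyz with rfl | hxz
        · exact Or.inr (hx α (by simp))
        · exact Or.inl ((sat_box M x δ).1 (hx _ (by simp)) z hxz)
  have hor : δ.or α ∈ Z.1 := hΔZ _ (hΓΔ _ hbb)
  exact Z.2.mem_of_entails (Δ := {δ.or α, δ.neg})
    (by simp [insert_subset_iff, hor, (Z.2.neg_mem_iff δ).2 hδZ]) (toFinite _)
    fun W M _ _ x hx => ((sat_or M x δ α).1 (hx _ (by simp))).resolve_left (hx δ.neg (by simp))

theorem exists_canR_superset {Γ : World} {S : Set MF}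
    (hS : ∀ s : Finset MF, ↑s ⊆ S → (MF.conj s).dia ∈ Γ.1) :
    ∃ Δ : World, canR Γ Δ ∧ S ⊆ Δ.1 := by
  have hcon : Consistent (S ∪ {θ | θ.box ∈ Γ.1}) := by
    intro Δ hΔ hf
    set s := (hf.inter_of_left S).toFinset
    obtain ⟨W, M, x, ht, hs, hx⟩ := Γ.2.1 (insert (MF.conj s).dia (MF.box '' (Δ \ S)))
      (insert_subset (hS s (by simp [s])) (by
        rintro _ ⟨θ, hθ, rfl⟩
        exact (hΔ hθ.1).resolve_left hθ.2))
      ((hf.sdiff.image _).insert _)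
    obtain ⟨y, hxy, hy⟩ := hx _ (mem_insert _ _)
    refine ⟨W, M, y, ht, hs, fun α hα => ?_⟩
    by_cases hαS : α ∈ S
    · exact (sat_conj M y s).1 hy α (by simp [s, hα, hαS])
    · exact (sat_box M x α).1 (hx _ (mem_insert_of_mem _ ⟨α, ⟨hα, hαS⟩, rfl⟩)) y hxy
  obtain ⟨Δ, hsub, hΔ⟩ := hcon.exists_maxConsistent_superset
  exact ⟨⟨Δ, hΔ⟩, fun θ hθ => hsub (Or.inr hθ), subset_union_left.trans hsub⟩

theorem sat_canModel_iff {α : MF} {Γ : World} : Sat canModel Γ α ↔ α ∈ Γ.1 := by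
  induction α generalizing Γ with
  | var n => exact Iff.rfl
  | top =>
    exact iff_of_true trivial
      (Γ.2.mem_of_entails (empty_subset _) finite_empty fun _ _ _ _ _ _ => trivial)
  | bot =>
    refine iff_of_false id fun h => ?_
    obtain ⟨W, M, x, -, -, hx⟩ := Γ.2.1 {MF.bot} (singleton_subset_iff.2 h) (toFinite _)
    exact hx _ rfl
  | neg a ih => exact (not_congr ih).trans (Γ.2.neg_mem_iff a).symm
  | and a b iha ihb =>
    refine (and_congr iha ihb).trans ⟨fun ⟨ha, hb⟩ => ?_, fun h => ⟨?_, ?_⟩⟩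
    · exact Γ.2.mem_of_entails (Δ := {a, b}) (by simp [insert_subset_iff, ha, hb])
        (toFinite _) fun W M _ _ x hx => ⟨hx a (by simp), hx b (by simp)⟩
    · exact Γ.2.mem_of_entails (singleton_subset_iff.2 h) (toFinite _)
        fun W M _ _ x hx => (hx _ rfl).1
    · exact Γ.2.mem_of_entails (singleton_subset_iff.2 h) (toFinite _)
        fun W M _ _ x hx => (hx _ rfl).2
  | dia a ih =>
    constructor
    · rintro ⟨Δ, hΓΔ, hΔa⟩
      by_contra hna
      have hbox : a.neg.box ∈ Γ.1 :=
        Γ.2.mem_of_entails (singleton_subset_iff.2 ((Γ.2.neg_mem_iff _).2 hna)) (toFinite _)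
          fun W M _ _ x hx => (sat_box M x _).2 fun y hxy hy => hx _ rfl ⟨y, hxy, hy⟩
      exact (Δ.2.neg_mem_iff a).1 (hΓΔ _ hbox) (ih.1 hΔa)
    · intro hda
      obtain ⟨Δ, hΓΔ, haΔ⟩ := exists_canR_superset (Γ := Γ) (S := {a}) fun s hs =>
        Γ.2.mem_of_entails (singleton_subset_iff.2 hda) (toFinite _) fun W M _ _ x hx => by
          obtain ⟨y, hxy, hy⟩ := hx _ rfl
          refine ⟨y, hxy, (sat_conj M y s).2 fun b hb => ?_⟩
          rwa [mem_singleton_iff.1 (hs hb)]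
      exact ⟨Δ, hΓΔ, ih.2 (haΔ rfl)⟩

theorem rType_eq_of_subset {ρ : Finset ℕ} {Γ Δ : World} (h : rType canModel ρ Δ ⊆ Γ.1) :
    rType canModel ρ Γ = rType canModel ρ Δ := by
  refine Subset.antisymm ?_ fun χ hχ => ⟨hχ.1, sat_canModel_iff.2 (h hχ)⟩
  rintro χ ⟨hρ, hχ⟩
  refine ⟨hρ, by_contra fun hn => ?_⟩
  exact (Γ.2.neg_mem_iff χ).1 (h ⟨hρ, hn⟩) (sat_canModel_iff.1 hχ)

theorem exists_canR_rType_eq {ρ : Finset ℕ} {Γ Δ Γ' : World}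
    (h : rType canModel ρ Γ = rType canModel ρ Δ) (hΓΓ' : canR Γ Γ') :
    ∃ Δ', canR Δ Δ' ∧ rType canModel ρ Γ' = rType canModel ρ Δ' := by
  obtain ⟨Δ', hΔΔ', hsub⟩ := exists_canR_superset (Γ := Δ) (S := rType canModel ρ Γ')
    fun s hs => by
      have hdia : (MF.conj s).dia ∈ rType canModel ρ Γ :=
        ⟨MF.sig_conj_subset fun a ha => (hs ha).1, Γ', hΓΓ',
          (sat_conj _ _ s).2 fun a ha => (hs ha).2⟩
      rw [h] at hdia
      exact sat_canModel_iff.1 hdia.2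
  exact ⟨Δ', hΔΔ', (rType_eq_of_subset hsub).symm⟩

theorem isBisim_rType_eq (ρ : Finset ℕ) :
    IsBisim ρ canModel canModel fun Γ Δ => rType canModel ρ Γ = rType canModel ρ Δ := by
  intro Γ Δ h
  refine ⟨fun n hn => ?_, fun Γ' => exists_canR_rType_eq h, fun Δ' hΔ' => ?_⟩
  · simpa [rType, Sat, MF.sig, hn] using Set.ext_iff.1 h (MF.var n)
  · obtain ⟨Γ', hΓΓ', h'⟩ := exists_canR_rType_eq h.symm hΔ'
    exact ⟨Γ', hΓΓ', h'.symm⟩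

theorem consistent_insert_of_conj {χ : MF} {T : Set MF}
    (h : ∀ s : Finset MF, ↑s ⊆ T → Satisfiable {χ, MF.conj s}) :
    Consistent (insert χ T) := by
  intro Δ hΔ hf
  obtain ⟨W, M, x, ht, hs, hx⟩ :=
    h (hf.sdiff (t := {χ})).toFinset (by simpa using diff_singleton_subset_iff.2 hΔ)
  have hconj := (sat_conj M x _).1 (hx _ (mem_insert_of_mem _ rfl))
  refine ⟨W, M, x, ht, hs, fun α hα => ?_⟩
  by_cases hαχ : α = χ
  · exact hαχ ▸ hx χ (by simp)
  · exact hconj α (by simp [hα, hαχ])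

theorem exists_rType_eq_of_not_interpolant {φ ψ : MF}
    (hno : ¬∃ ι : MF, ι.sig ⊆ φ.sig ∩ ψ.sig ∧
      DLValid (φ.imp ι) ∧ DLValid (ι.imp ψ)) :
    ∃ Γ1 Γ2 : World, Sat canModel Γ1 φ ∧ Sat canModel Γ2 ψ.neg ∧
      rType canModel (φ.sig ∩ ψ.sig) Γ1 = rType canModel (φ.sig ∩ ψ.sig) Γ2 := by
  set ρ := φ.sig ∩ ψ.sig
  have h2 : Consistent (insert ψ.neg {ι | ι.sig ⊆ ρ ∧ DLValid (φ.imp ι)}) :=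
    consistent_insert_of_conj fun s hs => by
      have hφs : DLValid (φ.imp (MF.conj s)) := fun W M ht hsy x =>
        (sat_imp M x _ _).2 fun hφ => (sat_conj M x s).2 fun a ha =>
          (sat_imp M x _ _).1 ((hs ha).2 W M ht hsy x) hφ
      have hsψ : ¬DLValid ((MF.conj s).imp ψ) := fun hv =>
        hno ⟨_, MF.sig_conj_subset fun a ha => (hs ha).1, hφs, hv⟩
      simp only [DLValid, sat_imp, not_forall, exists_prop] at hsψ
      obtain ⟨W, M, ht, hsy, x, hs, hψ⟩ := hsψ
      exact ⟨W, M, x, ht, hsy, by simp [Sat, hs, hψ]⟩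
  obtain ⟨Γ2, hsub2, hΓ2⟩ := h2.exists_maxConsistent_superset
  have h1 : Consistent (insert φ (rType canModel ρ ⟨Γ2, hΓ2⟩)) :=
    consistent_insert_of_conj fun s hs => by
      by_contra hns
      have hv : DLValid (φ.imp (MF.conj s).neg) := fun W M ht hsy x =>
        (sat_imp M x _ _).2 fun hφ hc => hns ⟨W, M, x, ht, hsy, by simp [hφ, hc]⟩
      have hneg : (MF.conj s).neg ∈ Γ2 :=
        hsub2 (Or.inr ⟨MF.sig_conj_subset fun a ha => (hs ha).1, hv⟩)
      exact (sat_canModel_iff (Γ := ⟨Γ2, hΓ2⟩)).2 hneg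
        ((sat_conj _ _ s).2 fun a ha => (hs ha).2)
  obtain ⟨Γ1, hsub1, hΓ1⟩ := h1.exists_maxConsistent_superset
  exact ⟨⟨Γ1, hΓ1⟩, ⟨Γ2, hΓ2⟩, sat_canModel_iff.2 (hsub1 (mem_insert _ _)),
    sat_canModel_iff.2 (hsub2 (mem_insert _ _)),
    rType_eq_of_subset fun χ hχ => hsub1 (mem_insert_of_mem _ hχ)⟩

end DL

/-- Criterion for interpolant non-existence in DL: φ → ψ has no interpolant
in DL iff there are rooted models on symmetric weakly transitive frames
satisfying φ and ¬ψ at their roots that are ρ-bisimilar at the roots. -/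
theorem stmt15 (φ ψ : MF) :
    (¬ ∃ ι : MF, ι.sig ⊆ φ.sig ∩ ψ.sig ∧
        DLValid (MF.imp φ ι) ∧ DLValid (MF.imp ι ψ)) ↔
    (∃ (W1 : Type) (M1 : KModel W1) (r1 : W1)
        (W2 : Type) (M2 : KModel W2) (r2 : W2),
      WTrans M1.R ∧ WTrans M2.R ∧ Symmetric M1.R ∧ Symmetric M2.R ∧
      (∀ x : W1, x ≠ r1 → M1.R r1 x) ∧ (∀ x : W2, x ≠ r2 → M2.R r2 x) ∧
      Sat M1 r1 φ ∧ Sat M2 r2 (MF.neg ψ) ∧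
      Bisimilar (φ.sig ∩ ψ.sig) M1 r1 M2 r2) := by
  constructor
  · intro hno
    obtain ⟨Γ1, Γ2, hφ, hψ, htype⟩ := DL.exists_rType_eq_of_not_interpolant hno
    exact exists_rooted_bisimilar DL.canR_wtrans DL.canR_wtrans DL.canR_symmetric
      DL.canR_symmetric (DL.isBisim_rType_eq _) htype hφ hψ
  · rintro ⟨W1, M1, r1, W2, M2, r2, ht1, ht2, hs1, hs2, -, -, hφ, hψ, β, hβ, hr⟩
      ⟨ι, hι, hφι, hιψ⟩
    have hι1 : Sat M1 r1 ι := (sat_imp M1 r1 φ ι).1 (hφι W1 M1 ht1 hs1 r1) hφ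
    exact hψ ((sat_imp M2 r2 ι ψ).1 (hιψ W2 M2 ht2 hs2 r2) ((hβ.sat_iff hι hr).1 hι1))
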